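/- For any arch systems A, B with A Wilf-equivalent to B, the atoms arch-over-A and arch-over-B are Wilf-equivalent; i.e., if there is a size-preserving bijection between Av(A) and Av(B) then there is one between Av(arch over A) and Av(arch over B). -/

import Mathlib

/-- Plane forests, modelling non-crossing arch systems: `node c r` is an atom
(an arch over the contents `c`) followed by the rest of the forest `r`. -/
inductive PF : Type
  | nil : PF
  | node : PF → PF → PF
  deriving DecidableEq

namespace PF

/-- number of arches (nodes) -/
def size : PF → ℕ
  | nil => 0
  | node c r => 1 + c.size + r.size

/-- concatenation of arch systems -/
def append : PF → PF → PF
  | nil, q => q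
  | node c r, q => node c (r.append q)

instance : Append PF := ⟨PF.append⟩

/-- an atom: a nonempty arch system with a single outermost arch -/
def IsAtom (a : PF) : Prop := ∃ c, a = node c nil

/-- an atom or the empty arch system -/
def AtomOrNil (a : PF) : Prop := a = nil ∨ IsAtom a

/-- One-step arch deletion: `Del X Y` means `Y` is obtained from `X` by deleting one arch
(the contents of a deleted arch are spliced in its place). -/
inductive Del : PF → PF → Prop
  | root (c r : PF) : Del (node c r) (c ++ r)
  | inside {c c' : PF} (r : PF) : Del c c' → Del (node c r) (node c' r)
  | rest {r r' : PF} (c : PF) : Del r r' → Del (node c r) (node c r')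

/-- `Contains X A` : `A` is a substructure (subsystem) of `X`. -/
def Contains (X A : PF) : Prop := Relation.ReflTransGen Del X A

/-- the class of arch systems avoiding `A` -/
def Av (A : PF) : Set PF := {X | ¬ Contains X A}

/-- Wilf-equivalence: same counting sequence by number of arches. -/
def WilfEq (A B : PF) : Prop :=
  ∀ n, Set.ncard {X | X ∈ Av A ∧ X.size = n} = Set.ncard {X | X ∈ Av B ∧ X.size = n}

/-- the generating function of `Av A`, counting by number of arches -/
noncomputable def F (A : PF) : PowerSeries ℚ :=
  PowerSeries.mk fun n => (Set.ncard {X | X ∈ Av A ∧ X.size = n} : ℚ)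

end PF

/-- concatenation of a list of arch systems -/
def concatList (L : List PF) : PF := L.foldr (· ++ ·) PF.nil

/-- The equivalence relation `∼` whose classes are cohorts: the finest equivalence
relation satisfying the four closure rules. -/
inductive Sim : PF → PF → Prop
  | refl (A : PF) : Sim A A
  | symm {A B : PF} : Sim A B → Sim B A
  | trans {A B C : PF} : Sim A B → Sim B C → Sim A C
  | arch {A B : PF} : Sim A B → Sim (PF.node A PF.nil) (PF.node B PF.nil)
  | subst {a b : PF} (P Q : PF) : PF.AtomOrNil a → PF.AtomOrNil b → Sim a b →
      Sim (P ++ a ++ Q) (P ++ b ++ Q)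
  | comm {a b : PF} (P Q : PF) : PF.AtomOrNil a → PF.AtomOrNil b →
      Sim (P ++ a ++ b ++ Q) (P ++ b ++ a ++ Q)
  | rot {a b c : PF} : PF.AtomOrNil a → PF.AtomOrNil b → PF.AtomOrNil c →
      Sim (a ++ PF.node (b ++ c) PF.nil) (PF.node (a ++ b) PF.nil ++ c)

/-- the nest of `n` nested arches -/
def nest : ℕ → PF
  | 0 => PF.nil
  | n + 1 => PF.node (nest n) PF.nil

/-- the `n`-th Motzkin number -/
def motzkin (n : ℕ) : ℕ := ∑ k ∈ Finset.range (n + 1), n.choose (2 * k) * catalan k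

/-- the truncated continued fractions `C_n` of the Catalan generating function -/
noncomputable def Cfun : ℕ → PowerSeries ℚ
  | 0 => 1
  | n + 1 => (1 - PowerSeries.X * Cfun n)⁻¹

/-- a balanced parenthesis word (Dyck word): `true` = opening, `false` = closing -/
def BalancedW (w : List Bool) : Prop :=
  w.count true = w.count false ∧ ∀ p : List Bool, p <+: w → p.count false ≤ p.count true

/-- the height of a Dyck path -/
def wheight (w : List Bool) : ℕ :=
  (w.inits.map fun p => p.count true - p.count false).foldr max 0

/-- One-step deletion of a matched pair of parentheses (an arch) in a word. -/
inductive WDel : List Bool → List Bool → Prop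
  | mk (x y z : List Bool) : BalancedW y →
      WDel (x ++ [true] ++ y ++ [false] ++ z) (x ++ y ++ z)

/-- `l` avoids the pattern 231 -/
def Avoids231 (l : List ℕ) : Prop := ¬ ∃ a b c : ℕ, [b, c, a].Sublist l ∧ a < b ∧ b < c

/-- `p` and `s` are order-isomorphic sequences -/
def OrdIso (p s : List ℕ) : Prop :=
  p.length = s.length ∧ ∀ i j : ℕ, i < p.length → j < p.length →
    (p.getD i 0 < p.getD j 0 ↔ s.getD i 0 < s.getD j 0)

/-!
Any arch of an arch system lies inside one of its outermost arches, so a system avoids the arch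
over `A` exactly when the contents of each outermost arch avoid `A`. Hence `Av (arch over A)` is
the set of finite sequences of arches over members of `Av A`, the size being the sum of
`1 + size` over the sequence, and a size-preserving bijection `Av A ≃ Av B` acts termwise on
these sequences.
-/

def Equiv.subtypeListEquivListSubtype {α : Type*} (p : α → Prop) :
    {l : List α // ∀ a ∈ l, p a} ≃ List (Subtype p) where
  toFun l := l.1.pmap Subtype.mk l.2
  invFun l := ⟨l.map Subtype.val, List.forall_mem_map.mpr fun a _ => a.2⟩
  left_inv l := Subtype.ext (by simp [List.map_pmap])
  right_inv l := by induction l <;> simp_all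

theorem Equiv.map_val_subtypeListEquivListSubtype {α : Type*} (p : α → Prop)
    (l : {l : List α // ∀ a ∈ l, p a}) :
    (subtypeListEquivListSubtype p l).map Subtype.val = l.1 := by
  simp [subtypeListEquivListSubtype, List.map_pmap]

namespace PF

theorem node_append (c r q : PF) : node c r ++ q = node c (r ++ q) := rfl

theorem append_nil (p : PF) : p ++ nil = p := by
  induction p with
  | nil => rfl
  | node c r _ ihr => rw [node_append, ihr]

def toList : PF → List PF
  | nil => []
  | node c r => c :: r.toList

def ofList (l : List PF) : PF := l.foldr node nil

theorem toList_append (p q : PF) : (p ++ q).toList = p.toList ++ q.toList := by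
  induction p with
  | nil => rfl
  | node c r _ ihr => simp [node_append, toList, ihr]

def equivList : PF ≃ List PF where
  toFun := toList
  invFun := ofList
  left_inv p := by induction p <;> simp_all [toList, ofList]
  right_inv l := by induction l <;> simp_all [toList, ofList]

theorem size_eq_sum_toList (p : PF) : p.size = (p.toList.map fun c => c.size + 1).sum := by
  induction p with
  | nil => rfl
  | node c r _ ihr => simp only [size, toList, List.map_cons, List.sum_cons, ihr]; ring

theorem contains_node_right {r r' : PF} (c : PF) (h : Contains r r') :
    Contains (node c r) (node c r') :=
  Relation.ReflTransGen.lift (node c) (fun _ _ h => Del.rest c h) r r' h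

theorem contains_node_left {c c' : PF} (r : PF) (h : Contains c c') :
    Contains (node c r) (node c' r) :=
  Relation.ReflTransGen.lift (node · r) (fun _ _ h => Del.inside r h) c c' h

theorem contains_append_right (p q : PF) : Contains (p ++ q) q := by
  induction p with
  | nil => exact Relation.ReflTransGen.refl
  | node c r ihc ihr =>
    exact (contains_node_right c ihr).trans
      ((Relation.ReflTransGen.single (Del.root c q)).trans ihc)

theorem contains_nil (p : PF) : Contains p nil := by
  simpa only [append_nil] using contains_append_right p nil

theorem contains_arch_of_mem_toList {p c : PF} (h : c ∈ p.toList) : Contains p (node c nil) := by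
  induction p with
  | nil => simp [toList] at h
  | node c' r _ ihr =>
    rcases List.mem_cons.mp h with rfl | h
    · exact contains_node_right c (contains_nil r)
    · exact (Relation.ReflTransGen.single (Del.root c' r)).trans
        ((contains_append_right c' r).trans (ihr h))

theorem contains_of_mem_toList {p c : PF} (h : c ∈ p.toList) : Contains p c := by
  have h' := (contains_arch_of_mem_toList h).tail (Del.root c nil)
  rwa [append_nil] at h'

theorem mem_av_of_contains {A p q : PF} (hp : p ∈ Av A) (h : Contains p q) : q ∈ Av A :=
  fun hq => hp (h.trans hq)

theorem forall_mem_toList_av_of_del {A p q : PF} (h : Del p q)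
    (hp : ∀ c ∈ p.toList, c ∈ Av A) : ∀ c ∈ q.toList, c ∈ Av A := by
  induction h with
  | root c r =>
    have hc : c ∈ Av A := hp c List.mem_cons_self
    intro c' hc'
    rcases List.mem_append.mp (toList_append c r ▸ hc') with hc' | hc'
    · exact mem_av_of_contains hc (contains_of_mem_toList hc')
    · exact hp c' (List.mem_cons_of_mem c hc')
  | inside r h =>
    intro c' hc'
    rcases List.mem_cons.mp hc' with rfl | hc'
    · exact mem_av_of_contains (hp _ List.mem_cons_self) (.single h)
    · exact hp c' (List.mem_cons_of_mem _ hc')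
  | rest c h ih =>
    intro c' hc'
    rcases List.mem_cons.mp hc' with rfl | hc'
    · exact hp c' List.mem_cons_self
    · exact ih (fun c'' h'' => hp c'' (List.mem_cons_of_mem c h'')) c' hc'

theorem forall_mem_toList_av_of_contains {A p q : PF} (h : Contains p q)
    (hp : ∀ c ∈ p.toList, c ∈ Av A) : ∀ c ∈ q.toList, c ∈ Av A := by
  induction h with
  | refl => exact hp
  | tail _ hdel ih => exact forall_mem_toList_av_of_del hdel ih

theorem mem_av_arch_iff {A p : PF} : p ∈ Av (node A nil) ↔ ∀ c ∈ p.toList, c ∈ Av A :=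
  ⟨fun hp _ hc hcA => hp ((contains_arch_of_mem_toList hc).trans (contains_node_left nil hcA)),
    fun hp hcon => forall_mem_toList_av_of_contains hcon hp A List.mem_cons_self .refl⟩

def avArchEquiv (A : PF) : Av (node A nil) ≃ List (Av A) :=
  (equivList.subtypeEquiv fun _ => (mem_av_arch_iff : _ ↔ ∀ c ∈ toList _, _)).trans
    (Equiv.subtypeListEquivListSubtype (· ∈ Av A))

theorem map_val_avArchEquiv {A : PF} (p : Av (node A nil)) :
    (avArchEquiv A p).map Subtype.val = p.1.toList :=
  Equiv.map_val_subtypeListEquivListSubtype _ _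

theorem size_eq_sum_avArchEquiv {A : PF} (p : Av (node A nil)) :
    p.1.size = ((avArchEquiv A p).map fun c => c.1.size + 1).sum := by
  rw [size_eq_sum_toList, ← map_val_avArchEquiv, List.map_map]
  rfl

end PF

/-- If there is a size-preserving bijection between `Av(A)` and `Av(B)`, then
there is one between `Av(arch over A)` and `Av(arch over B)`. -/
theorem bijection_lifts_to_arch (A B : PF)
    (h : ∃ e : {X : PF // X ∈ PF.Av A} ≃ {X : PF // X ∈ PF.Av B},
      ∀ x, (e x).val.size = x.val.size) :
    ∃ e : {X : PF // X ∈ PF.Av (PF.node A PF.nil)} ≃ {X : PF // X ∈ PF.Av (PF.node B PF.nil)},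
      ∀ x, (e x).val.size = x.val.size := by
  obtain ⟨e, he⟩ := h
  refine ⟨(PF.avArchEquiv A).trans ((Equiv.listEquivOfEquiv e).trans (PF.avArchEquiv B).symm),
    fun x => ?_⟩
  rw [PF.size_eq_sum_avArchEquiv, PF.size_eq_sum_avArchEquiv x]
  simp [Equiv.listEquivOfEquiv, Function.comp_def, he]
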